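/- arXiv:1811.03956 — 2 statements merged into one kernel-verified Lean document; each statement's English description precedes it below -/
import Mathlib

section
/- Let v, g ∈ ℝⁿ with g ≠ 0, and suppose v is not a scalar multiple of g. Let β ≠ 0 and Ξ = I + (1/β)·v gᵀ. Then the Euclidean operator norm of Ξ is strictly greater than 1. -/
/-!
Pick `z ⟂ v` with `⟪g, z⟫ ≠ 0`; it exists because otherwise `g ∈ (ℝ ∙ v)ᗮᗮ = ℝ ∙ v`. Then
`Ξ z = z + (⟪g, z⟫ / β) • v` is the hypotenuse of a right triangle whose legs `z` and
`(⟪g, z⟫ / β) • v` are both nonzero, so `‖Ξ z‖ > ‖z‖`.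
-/

/-- The Euclidean (ℓ²-induced) operator norm of a square real matrix. -/
noncomputable def eucOpNorm {n : ℕ} (M : Matrix (Fin n) (Fin n) ℝ) : ℝ :=
  ‖Matrix.toEuclideanCLM (𝕜 := ℝ) M‖

open Matrix InnerProductSpace WithLp
open scoped RealInnerProductSpace

theorem ContinuousLinearMap.one_lt_opNorm_of_norm_lt_norm_apply {𝕜 E F : Type*}
    [NontriviallyNormedField 𝕜] [SeminormedAddCommGroup E] [SeminormedAddCommGroup F]
    [NormedSpace 𝕜 E] [NormedSpace 𝕜 F] {T : E →L[𝕜] F} {x : E} (h : ‖x‖ < ‖T x‖) :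
    1 < ‖T‖ := by
  by_contra! hT
  exact h.not_ge <| (T.le_opNorm x).trans (mul_le_of_le_one_left (norm_nonneg x) hT)

section
variable {𝕜 E : Type*} [RCLike 𝕜] [NormedAddCommGroup E] [InnerProductSpace 𝕜 E]

theorem exists_inner_eq_zero_inner_ne_zero_of_notMem_span_singleton {v g : E}
    (hg : g ∉ 𝕜 ∙ v) : ∃ z, inner 𝕜 v z = 0 ∧ inner 𝕜 g z ≠ 0 := by
  by_contra! h
  refine hg ?_
  rw [← (𝕜 ∙ v).orthogonal_orthogonal, Submodule.mem_orthogonal]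
  intro z hz
  exact inner_eq_zero_symm.mp (h z (Submodule.mem_orthogonal_singleton_iff_inner_right.mp hz))

end

section
variable {E : Type*} [NormedAddCommGroup E] [InnerProductSpace ℝ E]

theorem norm_lt_norm_add_smul_of_inner_eq_zero {v z : E} (hvz : ⟪v, z⟫ = 0) (hv : v ≠ 0)
    {a : ℝ} (ha : a ≠ 0) : ‖z‖ < ‖z + a • v‖ := by
  have hperp : ⟪z, a • v⟫ = 0 := by rw [inner_smul_right, real_inner_comm, hvz, mul_zero]
  have hpos : 0 < ‖a • v‖ := norm_pos_iff.mpr (smul_ne_zero ha hv)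
  refine lt_of_mul_self_lt_mul_self₀ (norm_nonneg _) ?_
  rw [norm_add_sq_eq_norm_sq_add_norm_sq_real hperp]
  nlinarith

theorem one_lt_opNorm_one_add_smul_rankOne {v g : E} (hv : v ≠ 0) (hg : g ∉ ℝ ∙ v) {a : ℝ}
    (ha : a ≠ 0) : 1 < ‖1 + a • rankOne ℝ v g‖ := by
  obtain ⟨z, hvz, hgz⟩ := exists_inner_eq_zero_inner_ne_zero_of_notMem_span_singleton hg
  refine ContinuousLinearMap.one_lt_opNorm_of_norm_lt_norm_apply (x := z) ?_
  have := norm_lt_norm_add_smul_of_inner_eq_zero hvz hv (mul_ne_zero ha hgz)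
  simpa [smul_smul] using this

end

theorem Matrix.toEuclideanCLM_vecMulVec {n : Type*} [Fintype n] [DecidableEq n] (v g : n → ℝ) :
    toEuclideanCLM (𝕜 := ℝ) (vecMulVec v g) = rankOne ℝ (toLp 2 v) (toLp 2 g) := by
  ext x i
  simp [vecMulVec_mulVec, EuclideanSpace.inner_eq_star_dotProduct, dotProduct_comm, mul_comm]

theorem opNorm_nonaligned_rank_one_gt_one_general
    {n : ℕ} (v g : Fin n → ℝ) (hg : g ≠ 0)
    (hv : ¬ ∃ t : ℝ, v = t • g) (β : ℝ) (hβ : β ≠ 0) :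
    1 < eucOpNorm ((1 : Matrix (Fin n) (Fin n) ℝ) + (1 / β) • Matrix.vecMulVec v g) := by
  have hv0 : toLp 2 v ≠ 0 := by
    intro h
    exact hv ⟨0, by simpa using congrArg ofLp h⟩
  have hgv : toLp 2 g ∉ ℝ ∙ toLp 2 v := by
    intro h
    obtain ⟨a, ha⟩ := Submodule.mem_span_singleton.mp h
    have hag : a • v = g := by simpa using congrArg ofLp ha
    have ha0 : a ≠ 0 := by rintro rfl; exact hg (by simpa using hag.symm)
    exact hv ⟨a⁻¹, by rw [← hag, smul_smul, inv_mul_cancel₀ ha0, one_smul]⟩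
  rw [eucOpNorm, map_add, map_one, map_smul, toEuclideanCLM_vecMulVec]
  exact one_lt_opNorm_one_add_smul_rankOne hv0 hgv (one_div_ne_zero hβ)

/-- If `g ≠ 0`, `v` is not a scalar multiple of `g`, `β ≠ 0`, and
`Ξ = I + (1/β) v gᵀ` on `ℝⁿ` with `n ≥ 2`, then the Euclidean operator norm of `Ξ`
is strictly greater than `1`. -/
theorem opNorm_nonaligned_rank_one_gt_one
    {n : ℕ} (hn : 2 ≤ n) (v g : Fin n → ℝ) (hg : g ≠ 0)
    (hv : ¬ ∃ t : ℝ, v = t • g) (β : ℝ) (hβ : β ≠ 0) :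
    1 < eucOpNorm ((1 : Matrix (Fin n) (Fin n) ℝ) + (1 / β) • Matrix.vecMulVec v g) :=
  opNorm_nonaligned_rank_one_gt_one_general v g hg hv β hβ
end

section
/- Let A = [[−a_L, 0],[0, −b_L]] and B = [[−a_R, 0],[0, −b_R]] with a_L, a_R, b_L, b_R > 0. Define, for small ε_L, ε_R > 0 and δ ∈ ℝ, the points x = (1−ε_L, x₂) and z = (1+ε_R, x₂+δ). The derivative of ‖x−z‖₂² along the flows ẋ = Ax, ż = Bz equals 2(ε_L+ε_R)(a_L−a_R) + 2δx₂(b_L−b_R) + O(ε_L², ε_R², δ², ε_Lδ, ε_Rδ). In particular, the first-order terms are nonpositive for all x₂ ≥ 0 and all small ε_L, ε_R > 0, δ ∈ ℝ if and only if a_L ≤ a_R and b_L = b_R. -/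
/-!
Both points and both matrices are explicit, so the derivative `2(x−z)ᵀ(Ax − Bz)` is a polynomial
identity in the parameters. For the characterisation, the first-order term
`2(ε_L+ε_R)(a_L−a_R) + 2δx₂(b_L−b_R)` is affine in `δ` for fixed `x₂ = 1`, and an affine function
bounded above on all of `ℝ` has zero slope; this forces `b_L = b_R`, and `a_L ≤ a_R` is read off at
`x₂ = 0`.
-/

lemma eq_zero_of_forall_add_mul_nonpos {K : Type*} [Field K] [LinearOrder K]
    [IsStrictOrderedRing K] {a c : K} (h : ∀ t : K, a + t * c ≤ 0) : c = 0 := by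
  by_contra hc
  have := h ((1 - a) / c)
  rw [div_mul_cancel₀ _ hc] at this
  linarith

lemma two_dotProduct_sub_diag_mulVec_sub (aL aR bL bR εL εR δ x₂ : ℝ) :
    2 * dotProduct (![1 - εL, x₂] - ![1 + εR, x₂ + δ])
        ((!![-aL, 0; 0, -bL] : Matrix (Fin 2) (Fin 2) ℝ).mulVec ![1 - εL, x₂] -
          (!![-aR, 0; 0, -bR] : Matrix (Fin 2) (Fin 2) ℝ).mulVec ![1 + εR, x₂ + δ]) =
      2 * (εL + εR) * (aL - aR) + 2 * δ * x₂ * (bL - bR)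
        - 2 * (εL + εR) * (aL * εL + aR * εR) - 2 * bR * δ ^ 2 := by
  simp only [dotProduct, Matrix.mulVec, Fin.sum_univ_two, Matrix.cons_val_zero,
    Matrix.cons_val_one, Matrix.of_apply, Pi.sub_apply, Matrix.cons_val', Matrix.empty_val',
    Matrix.cons_val_fin_one]
  ring

lemma first_order_nonpos_iff (aL aR bL bR : ℝ) :
    (∀ x₂ : ℝ, 0 ≤ x₂ → ∀ εL εR : ℝ, 0 < εL → 0 < εR → ∀ δ : ℝ,
        2 * (εL + εR) * (aL - aR) + 2 * δ * x₂ * (bL - bR) ≤ 0) ↔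
      (aL ≤ aR ∧ bL = bR) := by
  constructor
  · intro h
    have hb : 2 * (bL - bR) = 0 :=
      eq_zero_of_forall_add_mul_nonpos (a := 4 * (aL - aR)) fun δ => by
        have := h 1 zero_le_one 1 1 one_pos one_pos δ
        linarith
    have ha := h 0 le_rfl 1 1 one_pos one_pos 0
    constructor <;> linarith
  · rintro ⟨ha, rfl⟩ x₂ _ εL εR hεL hεR δ
    nlinarith

theorem piecewise_linear_contraction_first_order_general
    (aL aR bL bR : ℝ) :
    (∀ εL εR δ x₂ : ℝ,
      2 * dotProduct (![1 - εL, x₂] - ![1 + εR, x₂ + δ])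
          ((!![-aL, 0; 0, -bL] : Matrix (Fin 2) (Fin 2) ℝ).mulVec ![1 - εL, x₂] -
            (!![-aR, 0; 0, -bR] : Matrix (Fin 2) (Fin 2) ℝ).mulVec ![1 + εR, x₂ + δ]) =
        2 * (εL + εR) * (aL - aR) + 2 * δ * x₂ * (bL - bR)
          - 2 * (εL + εR) * (aL * εL + aR * εR) - 2 * bR * δ ^ 2) ∧
    ((∀ x₂ : ℝ, 0 ≤ x₂ → ∀ εL εR : ℝ, 0 < εL → 0 < εR → ∀ δ : ℝ,
        2 * (εL + εR) * (aL - aR) + 2 * δ * x₂ * (bL - bR) ≤ 0) ↔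
      (aL ≤ aR ∧ bL = bR)) :=
  ⟨two_dotProduct_sub_diag_mulVec_sub aL aR bL bR, first_order_nonpos_iff aL aR bL bR⟩

/-- For `A = diag(−a_L, −b_L)`, `B = diag(−a_R, −b_R)` with positive parameters, and
points `x = (1−ε_L, x₂)`, `z = (1+ε_R, x₂+δ)`, the derivative of `‖x−z‖₂²` along the
flows `ẋ = Ax`, `ż = Bz`, namely `2(x−z)ᵀ(Ax − Bz)`, equals
`2(ε_L+ε_R)(a_L−a_R) + 2δx₂(b_L−b_R)` plus an explicit remainder that is quadratic in
`ε_L, ε_R, δ`; and the first-order terms are nonpositive for all `x₂ ≥ 0` and all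
`ε_L, ε_R > 0`, `δ ∈ ℝ`, if and only if `a_L ≤ a_R` and `b_L = b_R`. -/
theorem piecewise_linear_contraction_first_order
    (aL aR bL bR : ℝ) (haL : 0 < aL) (haR : 0 < aR) (hbL : 0 < bL) (hbR : 0 < bR) :
    (∀ εL εR δ x₂ : ℝ,
      2 * dotProduct (![1 - εL, x₂] - ![1 + εR, x₂ + δ])
          ((!![-aL, 0; 0, -bL] : Matrix (Fin 2) (Fin 2) ℝ).mulVec ![1 - εL, x₂] -
            (!![-aR, 0; 0, -bR] : Matrix (Fin 2) (Fin 2) ℝ).mulVec ![1 + εR, x₂ + δ]) =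
        2 * (εL + εR) * (aL - aR) + 2 * δ * x₂ * (bL - bR)
          - 2 * (εL + εR) * (aL * εL + aR * εR) - 2 * bR * δ ^ 2) ∧
    ((∀ x₂ : ℝ, 0 ≤ x₂ → ∀ εL εR : ℝ, 0 < εL → 0 < εR → ∀ δ : ℝ,
        2 * (εL + εR) * (aL - aR) + 2 * δ * x₂ * (bL - bR) ≤ 0) ↔
      (aL ≤ aR ∧ bL = bR)) :=
  piecewise_linear_contraction_first_order_general aL aR bL bR
end
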